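/- Let t and z be positive integers, (T,B) a normal tree decomposition of a t-tree H, and for each i ∈ {1,…,z} let X_i ⊆ V(H) be a set inducing a connected subgraph of H. Let H* be the graph with vertex set V(H) in which distinct vertices v and w are adjacent iff there exist i, j ∈ {1,…,z} with {v} ⊆ X_i ⊆ V(T_v), {w} ⊆ X_j ⊆ V(T_w), and H[X_i ∪ X_j] connected. Then for all integers s₁ ≥ 1 and s₂ ≥ 2, at least one of the following holds: (1) H* has treewidth at most (s₁ + 2)(t + 1)^{s₂} − 2, or (2) there are subsets S₁ and S₂ of V(H) with |S₁| ≥ s₁ and |S₂| ≥ s₂ such that for each v ∈ S₁ there exists i ∈ {1,…,z} with {v} ⊆ X_i ⊆ V(T_v) and S₂ ⊆ X_i. -/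

import Mathlib

open Set

noncomputable section

/-- The Euclidean plane. -/
abbrev Plane : Type := EuclideanSpace ℝ (Fin 2)

/-- A topological graph: a simple graph whose vertices are distinct points of the plane and
whose edges are non-self-intersecting curves between the points of their endpoints, such that
no edge passes through a vertex other than its endpoints, each pair of edges intersects in a
finite number of points, and no three edges internally intersect at a common point.
The curve of the edge between adjacent vertices `v` and `w` is `curve v w` restricted to
`[0,1]`, parametrised so that `curve v w t = curve w v (1 - t)`. -/
structure TopoGraph (V : Type) where
  /-- the underlying abstract simple graph -/
  G : SimpleGraph V
  /-- the position of each vertex in the plane -/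
  pos : V → Plane
  pos_inj : Function.Injective pos
  /-- parametrised curves: `curve v w` on `[0,1]` is the edge from `v` to `w` (when adjacent) -/
  curve : V → V → ℝ → Plane
  curve_symm : ∀ v w t, curve v w t = curve w v (1 - t)
  curve_cont : ∀ v w, G.Adj v w → ContinuousOn (curve v w) (Set.Icc 0 1)
  curve_injOn : ∀ v w, G.Adj v w → Set.InjOn (curve v w) (Set.Icc 0 1)
  curve_zero : ∀ v w, G.Adj v w → curve v w 0 = pos v
  curve_avoid : ∀ v w, G.Adj v w → ∀ t ∈ Set.Ioo (0:ℝ) 1, curve v w t ∉ Set.range pos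
  finite_inter : ∀ v w x y, G.Adj v w → G.Adj x y → s(v, w) ≠ s(x, y) →
    ((curve v w '' Set.Icc 0 1) ∩ (curve x y '' Set.Icc 0 1)).Finite
  no_three : ∀ v₁ w₁ v₂ w₂ v₃ w₃, G.Adj v₁ w₁ → G.Adj v₂ w₂ → G.Adj v₃ w₃ →
    s(v₁, w₁) ≠ s(v₂, w₂) → s(v₁, w₁) ≠ s(v₃, w₃) → s(v₂, w₂) ≠ s(v₃, w₃) →
    ∀ p : Plane,
      ¬(p ∈ curve v₁ w₁ '' Set.Ioo (0:ℝ) 1 ∧ p ∈ curve v₂ w₂ '' Set.Ioo (0:ℝ) 1 ∧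
        p ∈ curve v₃ w₃ '' Set.Ioo (0:ℝ) 1)

namespace TopoGraph

variable {V : Type}

/-- The set of internal points of the edge `e`. -/
def intArc (X : TopoGraph V) (e : Sym2 V) : Set Plane :=
  {p | ∃ v w, e = s(v, w) ∧ p ∈ X.curve v w '' Set.Ioo (0:ℝ) 1}

/-- The set of points of the edge `e` (including its endpoints). -/
def arcSet (X : TopoGraph V) (e : Sym2 V) : Set Plane :=
  {p | ∃ v w, e = s(v, w) ∧ p ∈ X.curve v w '' Set.Icc (0:ℝ) 1}

/-- Two edges cross if they have an internal intersection point. -/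
def Crosses (X : TopoGraph V) (e f : Sym2 V) : Prop :=
  e ≠ f ∧ (X.intArc e ∩ X.intArc f).Nonempty

end TopoGraph

/-- A finite set of edges (elements of `Sym2 V`) is a matching if its members are pairwise
vertex-disjoint. -/
def PairwiseDisjointEdges {V : Type} (M : Finset (Sym2 V)) : Prop :=
  (M : Set (Sym2 V)).Pairwise fun e f => ∀ v : V, ¬(v ∈ e ∧ v ∈ f)

namespace TopoGraph

variable {V : Type}

/-- `X` is `k`-matching-planar: for every edge `e`, every matching amongst the edges
crossing `e` has size at most `k`. -/
def MatchingPlanar (X : TopoGraph V) (k : ℕ) : Prop :=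
  ∀ e ∈ X.G.edgeSet, ∀ M : Finset (Sym2 V),
    (∀ f ∈ M, f ∈ X.G.edgeSet ∧ X.Crosses f e) → PairwiseDisjointEdges M → M.card ≤ k

/-- `X` is `k`-cover-planar: for every edge `e`, the set of edges crossing `e` has a vertex
cover of size at most `k`. -/
def CoverPlanar (X : TopoGraph V) (k : ℕ) : Prop :=
  ∀ e ∈ X.G.edgeSet, ∃ U : Finset V, U.card ≤ k ∧
    ∀ f ∈ X.G.edgeSet, X.Crosses f e → ∃ v ∈ U, v ∈ f

/-- No `t` edges of `X` incident to a common vertex pairwise cross. -/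
def NoCrossingFan (X : TopoGraph V) (t : ℕ) : Prop :=
  ∀ v : V, ∀ S : Finset (Sym2 V),
    (∀ e ∈ S, e ∈ X.G.edgeSet ∧ v ∈ e) →
    ((S : Set (Sym2 V)).Pairwise X.Crosses) → S.card < t

/-- An edge-colouring is transparent if no two edges of the same colour cross. -/
def Transparent (X : TopoGraph V) (φ : Sym2 V → ℕ) : Prop :=
  ∀ e ∈ X.G.edgeSet, ∀ f ∈ X.G.edgeSet, φ e = φ f → ¬X.Crosses e f

/-- An ordered `c`-edge-colouring: each edge receives a colour in `{1, …, c}`. -/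
def IsOrderedColouring (X : TopoGraph V) (c : ℕ) (φ : Sym2 V → ℕ) : Prop :=
  ∀ e ∈ X.G.edgeSet, 1 ≤ φ e ∧ φ e ≤ c

/-- The topological thickness of `X` is at most `c`: there is a transparent
`c`-edge-colouring of `X`. -/
def ThicknessAtMost (X : TopoGraph V) (c : ℕ) : Prop :=
  ∃ φ : Sym2 V → ℕ, (∀ e ∈ X.G.edgeSet, φ e < c) ∧ X.Transparent φ

/-- The parameters `t ∈ (0,1)` at which the edge from `v` to `w` is crossed by an edge
of strictly smaller colour. -/
def smallCrossParams (X : TopoGraph V) (φ : Sym2 V → ℕ) (v w : V) : Set ℝ :=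
  {t | t ∈ Set.Ioo (0:ℝ) 1 ∧
    ∃ f ∈ X.G.edgeSet, φ f < φ s(v, w) ∧ X.curve v w t ∈ X.intArc f}

/-- `F` is a fragment of the edge from `v` to `w`: one of the subcurves into which the
crossing points with the edges of smaller colour split the edge. -/
def IsFragment (X : TopoGraph V) (φ : Sym2 V → ℕ) (v w : V) (F : Set Plane) : Prop :=
  ∃ a b : ℝ, a < b ∧
    (a = 0 ∨ a ∈ X.smallCrossParams φ v w) ∧
    (b = 1 ∨ b ∈ X.smallCrossParams φ v w) ∧
    Set.Ioo a b ∩ X.smallCrossParams φ v w = ∅ ∧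
    F = X.curve v w '' Set.Icc a b

/-- The edge `f` crosses the (sub)curve `F`. -/
def CrossesSet (X : TopoGraph V) (f : Sym2 V) (F : Set Plane) : Prop :=
  (F ∩ X.intArc f).Nonempty

/-- The set of crossing points of the edge `e` with the edges of smaller colour. -/
def smallCrossPoints (X : TopoGraph V) (φ : Sym2 V → ℕ) (e : Sym2 V) : Set Plane :=
  {p | p ∈ X.intArc e ∧ ∃ f ∈ X.G.edgeSet, φ f < φ e ∧ p ∈ X.intArc f}

/-- A geometric graph: every edge is a straight line segment. -/
def IsGeometric (X : TopoGraph V) : Prop :=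
  ∀ v w, X.G.Adj v w → X.curve v w '' Set.Icc 0 1 = segment ℝ (X.pos v) (X.pos w)

/-- A circular graph: a geometric graph whose vertices lie on a circle. -/
def IsCircular (X : TopoGraph V) : Prop :=
  X.IsGeometric ∧ ∃ (o : Plane) (ρ : ℝ), 0 < ρ ∧ ∀ v : V, dist (X.pos v) o = ρ

/-- The crossing graph of `X`: vertices are the edges of `X`, two being adjacent iff
they cross. -/
def crossingGraph (X : TopoGraph V) : SimpleGraph X.G.edgeSet :=
  SimpleGraph.fromRel fun e f => X.Crosses e.1 f.1

end TopoGraph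

noncomputable section

/-- `(T, B)` is a tree decomposition of `G`. -/
structure IsTreeDecomp {V ι : Type} (G : SimpleGraph V) (T : SimpleGraph ι)
    (B : ι → Set V) : Prop where
  isTree : T.IsTree
  edges_covered : ∀ ⦃v w : V⦄, G.Adj v w → ∃ i, v ∈ B i ∧ w ∈ B i
  verts_covered : ∀ v : V, ∃ i, v ∈ B i
  bags_connected : ∀ v : V, (T.induce {i | v ∈ B i}).Connected

/-- The treewidth of `G` is at most `w`: `G` has a tree decomposition of width at most `w`. -/
def TreewidthAtMost {V : Type} (G : SimpleGraph V) (w : ℕ) : Prop :=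
  ∃ (ι : Type) (T : SimpleGraph ι) (B : ι → Set V),
    IsTreeDecomp G T B ∧ ∀ i, (B i).encard ≤ (w : ℕ∞) + 1

/-- A layering of `G`: every edge joins two vertices in the same or consecutive layers. -/
def IsLayering {V : Type} (G : SimpleGraph V) (L : V → ℕ) : Prop :=
  ∀ ⦃v w : V⦄, G.Adj v w → L v ≤ L w + 1 ∧ L w ≤ L v + 1

/-- The layered treewidth of `G` is at most `ℓ`. -/
def LayeredTreewidthAtMost {V : Type} (G : SimpleGraph V) (ℓ : ℕ) : Prop :=
  ∃ (ι : Type) (T : SimpleGraph ι) (B : ι → Set V) (L : V → ℕ),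
    IsTreeDecomp G T B ∧ IsLayering G L ∧
    ∀ i n, (B i ∩ {v | L v = n}).encard ≤ (ℓ : ℕ∞)

/-- The layered treewidth of `G`: the minimum, over all tree decompositions of `G` and all
layerings of `G`, of the maximum number of vertices in the intersection of a bag and a layer. -/
noncomputable def layeredTreewidth {V : Type} (G : SimpleGraph V) : ℕ∞ :=
  sInf {ℓ : ℕ∞ | ∃ (ι : Type) (T : SimpleGraph ι) (B : ι → Set V) (L : V → ℕ),
    IsTreeDecomp G T B ∧ IsLayering G L ∧ ∀ i n, (B i ∩ {v | L v = n}).encard ≤ ℓ}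

/-- The strong product of two simple graphs. -/
def StrongProd {α β : Type} (G : SimpleGraph α) (H : SimpleGraph β) :
    SimpleGraph (α × β) where
  Adj x y := x ≠ y ∧ (x.1 = y.1 ∨ G.Adj x.1 y.1) ∧ (x.2 = y.2 ∨ H.Adj x.2 y.2)
  symm := ⟨by
    rintro x y ⟨hne, h1, h2⟩
    exact ⟨hne.symm, h1.imp Eq.symm SimpleGraph.Adj.symm, h2.imp Eq.symm SimpleGraph.Adj.symm⟩⟩
  loopless := ⟨fun x h => h.1 rfl⟩

/-- The row treewidth of `G` is at most `w`: `G` is isomorphic to a subgraph of `H ⊠ P` for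
some graph `H` of treewidth at most `w` and some path `P`. -/
def RowTreewidthAtMost {V : Type} (G : SimpleGraph V) (w : ℕ) : Prop :=
  ∃ (ι : Type) (H : SimpleGraph ι) (n : ℕ) (f : V → ι × Fin n),
    TreewidthAtMost H w ∧ Function.Injective f ∧
    ∀ ⦃v u : V⦄, G.Adj v u → (StrongProd H (SimpleGraph.pathGraph n)).Adj (f v) (f u)

/-- `μ` is a model of `G` in `H`. -/
def IsMinorModel {α V : Type} (G : SimpleGraph α) (H : SimpleGraph V)
    (μ : α → Set V) : Prop :=
  (∀ a, (μ a).Nonempty) ∧ (∀ a, (H.induce (μ a)).Connected) ∧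
  (∀ ⦃a b : α⦄, a ≠ b → Disjoint (μ a) (μ b)) ∧
  (∀ ⦃a b : α⦄, G.Adj a b → ∃ x ∈ μ a, ∃ y ∈ μ b, H.Adj x y)

/-- `G` is a weak `r`-shallow minor of `H`: there is a model of `G` in `H` each of whose
branch sets has weak radius at most `r` in `H`. -/
def WeakShallowMinor {α V : Type} (G : SimpleGraph α) (H : SimpleGraph V) (r : ℕ) : Prop :=
  ∃ μ : α → Set V, IsMinorModel G H μ ∧
    ∀ a, ∃ h : V, ∀ x ∈ μ a, ∃ p : H.Walk h x, p.length ≤ r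

/-- The subgraph of `G` on the vertex set `S` has radius at most `r`. -/
def RadiusAtMostOn {V : Type} (G : SimpleGraph V) (S : Set V) (r : ℕ) : Prop :=
  ∃ y : S, ∀ x : S, ∃ p : (G.induce S).Walk y x, p.length ≤ r

/-- An apex-forest: deleting at most one vertex leaves a forest. -/
def IsApexForest {V : Type} (J : SimpleGraph V) : Prop :=
  ∃ A : Set V, A.Subsingleton ∧ (J.induce Aᶜ).IsAcyclic

/-- In the tree `T` rooted at `root`, `a` is a `T`-ancestor of `x`, i.e. `a` lies on the
path in `T` from `root` to `x`. (Every node is an ancestor of itself.) -/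
def IsAncestor {ι : Type} (T : SimpleGraph ι) (root : ι) (a x : ι) : Prop :=
  ∀ p : T.Walk root x, p.IsPath → a ∈ p.support

/-- The closure of the tree `T` rooted at `root`: two distinct nodes are adjacent iff one
is a (strict) `T`-ancestor of the other. -/
def treeClosure {ι : Type} (T : SimpleGraph ι) (root : ι) : SimpleGraph ι :=
  SimpleGraph.fromRel fun a x => IsAncestor T root a x

/-- The set `S` induces a non-empty path in `J`. -/
def InducesNonemptyPath {α : Type} (J : SimpleGraph α) (S : Set α) : Prop :=
  ∃ m : ℕ, 1 ≤ m ∧ Nonempty ((J.induce S) ≃g SimpleGraph.pathGraph m)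

/-- `J` is `(t,y)`-good: there is a graph `H` of treewidth at most `t` and a path `P` such
that a subgraph `J'` of `H ⊠ P` is isomorphic to `J` and, for all but at most `y` vertices
`v` of `H`, the set `({v} × V(P)) ∩ V(J')` induces a non-empty path of `J'`. -/
def IsGood {α : Type} (J : SimpleGraph α) (t y : ℕ) : Prop :=
  ∃ (ι : Type) (H : SimpleGraph ι) (n : ℕ) (f : α → ι × Fin n),
    TreewidthAtMost H t ∧ Function.Injective f ∧
    (∀ ⦃u v : α⦄, J.Adj u v → (StrongProd H (SimpleGraph.pathGraph n)).Adj (f u) (f v)) ∧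
    {v : ι | ¬InducesNonemptyPath J {a : α | (f a).1 = v}}.encard ≤ (y : ℕ∞)

/-- A star: `K₁` or `K_{1,t}` for some `t ≥ 1`. -/
def IsStarGraph {V : Type} (G : SimpleGraph V) : Prop :=
  ∃ c : V, (∀ v : V, v ≠ c → G.Adj c v) ∧ ∀ ⦃v w : V⦄, G.Adj v w → v = c ∨ w = c

/-- A star-forest: a forest each of whose components is a star. -/
def IsStarForest {V : Type} (G : SimpleGraph V) : Prop :=
  G.IsAcyclic ∧ ∀ a b c d : V, G.Adj a b → G.Adj b c → G.Adj c d → a = c ∨ b = d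

/-- The arboricity of `G` is at most `a`: `G` is the union of `a` edge-disjoint forests. -/
def ArboricityAtMost {V : Type} (G : SimpleGraph V) (a : ℕ) : Prop :=
  ∃ φ : Sym2 V → ℕ, (∀ e ∈ G.edgeSet, φ e < a) ∧
    ∀ i : ℕ, (SimpleGraph.fromEdgeSet {e | e ∈ G.edgeSet ∧ φ e = i}).IsAcyclic

/-- The star arboricity of `G` is at most `a`: `G` is the union of `a` edge-disjoint
star-forests. -/
def StarArboricityAtMost {V : Type} (G : SimpleGraph V) (a : ℕ) : Prop :=
  ∃ φ : Sym2 V → ℕ, (∀ e ∈ G.edgeSet, φ e < a) ∧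
    ∀ i : ℕ, IsStarForest (SimpleGraph.fromEdgeSet {e | e ∈ G.edgeSet ∧ φ e = i})

/-- `G` is an outerstring graph: the intersection graph of a collection of curves in the
closed upper half-plane, each having exactly one point on the boundary line, which is an
endpoint of the curve. -/
def IsOuterstring {V : Type} (G : SimpleGraph V) : Prop :=
  ∃ γ : V → ℝ → Plane,
    (∀ v, ContinuousOn (γ v) (Set.Icc 0 1)) ∧
    (∀ v, ∀ t ∈ Set.Icc (0:ℝ) 1, 0 ≤ γ v t 1) ∧
    (∀ v, γ v 0 1 = 0) ∧
    (∀ v, ∀ t ∈ Set.Ioc (0:ℝ) 1, γ v t 1 ≠ 0) ∧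
    ∀ v w : V, G.Adj v w ↔ v ≠ w ∧ (γ v '' Set.Icc 0 1 ∩ γ w '' Set.Icc 0 1).Nonempty

section EulerGenus

/-- The setoid on `α` whose classes are the orbits of a set `S` of permutations of `α`. -/
def permOrbitSetoid {α : Type} (S : Set (Equiv.Perm α)) : Setoid α :=
  Relation.EqvGen.setoid fun a b => ∃ π ∈ S, π a = b

/-- A combinatorial map (graph-encoded map): a finite set of flags together with three
fixed-point-free involutions `σ₀, σ₁, σ₂` such that `σ₀σ₂ = σ₂σ₀` is fixed-point free.
These encode exactly the cellular embeddings of graphs in closed surfaces. -/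
structure CombMap : Type 1 where
  flags : Type
  fin : Finite flags
  σ₀ : Equiv.Perm flags
  σ₁ : Equiv.Perm flags
  σ₂ : Equiv.Perm flags
  inv₀ : ∀ f, σ₀ (σ₀ f) = f
  inv₁ : ∀ f, σ₁ (σ₁ f) = f
  inv₂ : ∀ f, σ₂ (σ₂ f) = f
  nf₀ : ∀ f, σ₀ f ≠ f
  nf₁ : ∀ f, σ₁ f ≠ f
  nf₂ : ∀ f, σ₂ f ≠ f
  comm₀₂ : ∀ f, σ₀ (σ₂ f) = σ₂ (σ₀ f)
  nf₀₂ : ∀ f, σ₀ (σ₂ f) ≠ f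

namespace CombMap

/-- The vertices of the map: the orbits of `⟨σ₁, σ₂⟩` on flags. -/
def Verts (M : CombMap) : Type := Quotient (permOrbitSetoid {M.σ₁, M.σ₂})

/-- The number of vertices of the map. -/
noncomputable def numV (M : CombMap) : ℕ := Nat.card M.Verts

/-- The number of edges of the map: the number of orbits of `⟨σ₀, σ₂⟩` on flags. -/
noncomputable def numE (M : CombMap) : ℕ :=
  Nat.card (Quotient (permOrbitSetoid {M.σ₀, M.σ₂}))

/-- The number of faces of the map: the number of orbits of `⟨σ₀, σ₁⟩` on flags. -/
noncomputable def numF (M : CombMap) : ℕ :=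
  Nat.card (Quotient (permOrbitSetoid {M.σ₀, M.σ₁}))

/-- The number of connected components of the map. -/
noncomputable def numC (M : CombMap) : ℕ :=
  Nat.card (Quotient (permOrbitSetoid {M.σ₀, M.σ₁, M.σ₂}))

/-- The Euler genus `2c - (V - E + F)` of the map is at most `g`. -/
def EulerGenusAtMost (M : CombMap) (g : ℕ) : Prop :=
  2 * (M.numC : ℤ) - ((M.numV : ℤ) - (M.numE : ℤ) + (M.numF : ℤ)) ≤ (g : ℤ)

/-- The graph of the map: two distinct vertices are adjacent iff some edge-orbit contains a
flag of each. -/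
def graph (M : CombMap) : SimpleGraph M.Verts :=
  SimpleGraph.fromRel fun u v => ∃ a b : M.flags,
    Quotient.mk (permOrbitSetoid {M.σ₁, M.σ₂}) a = u ∧
    Quotient.mk (permOrbitSetoid {M.σ₁, M.σ₂}) b = v ∧
    (permOrbitSetoid {M.σ₀, M.σ₂}).r a b

end CombMap

/-- The Euler genus of `H` is at most `g`: `H` embeds in a closed surface of Euler genus at
most `g`, i.e. `H` is isomorphic to a subgraph of the graph of a combinatorial map of Euler
genus at most `g`. -/
def EulerGenusAtMost {ι : Type} (H : SimpleGraph ι) (g : ℕ) : Prop :=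
  ∃ M : CombMap, M.EulerGenusAtMost g ∧
    ∃ φ : ι → M.Verts, Function.Injective φ ∧
      ∀ ⦃u v : ι⦄, H.Adj u v → M.graph.Adj (φ u) (φ v)

/-- The Euler genus of a graph: the minimum Euler genus of a surface in which it embeds. -/
noncomputable def eulerGenus {ι : Type} (H : SimpleGraph ι) : ℕ∞ :=
  sInf {n : ℕ∞ | ∃ g : ℕ, n = (g : ℕ∞) ∧ EulerGenusAtMost H g}

end EulerGenus

section AuxForStatement19
open SimpleGraph
set_option linter.unusedSectionVars false
set_option linter.unusedVariables false

section TreeLemmas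

variable {ι : Type} [DecidableEq ι] {T : SimpleGraph ι} {root : ι}

local notation "anc" => IsAncestor T root

lemma anc_refl (a : ι) : anc a a := fun p _ => p.end_mem_support

lemma exists_canon (hT : T.IsTree) (x : ι) : ∃ p : T.Walk root x, p.IsPath :=
  ((hT.existsUnique_path root x).exists)

lemma anc_of_path (hT : T.IsTree) {a x : ι} (p : T.Walk root x) (hp : p.IsPath)
    (ha : a ∈ p.support) : anc a x := by
  intro q hq
  obtain ⟨r, _, hu⟩ := hT.existsUnique_path root x
  rw [hu q hq, ← hu p hp]; exact ha

lemma anc_trans (hT : T.IsTree) {a b c : ι} (h1 : anc a b) (h2 : anc b c) : anc a c := by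
  obtain ⟨p, hp⟩ := exists_canon hT c
  have hb : b ∈ p.support := h2 p hp
  have htake := hp.takeUntil hb
  have ha : a ∈ (p.takeUntil b hb).support := h1 _ htake
  exact anc_of_path hT p hp (p.support_takeUntil_subset hb ha)

lemma anc_antisymm (hT : T.IsTree) {a x : ι} (h1 : anc a x) (h2 : anc x a) : a = x := by
  by_contra hne
  obtain ⟨p, hp⟩ := exists_canon hT x
  have ha : a ∈ p.support := h1 p hp
  have hx : x ∈ (p.takeUntil a ha).support := h2 _ (hp.takeUntil ha)
  have hspec := p.take_spec ha
  have hnd : p.support.Nodup := hp.support_nodup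
  have hx2 : x ∈ (p.dropUntil a ha).support.tail :=
    SimpleGraph.Walk.end_mem_tail_support_of_ne hne _
  rw [← hspec, SimpleGraph.Walk.support_append] at hnd
  exact (List.disjoint_of_nodup_append hnd) hx hx2

/-- comparability of two ancestors of a common node -/
lemma anc_comparable (hT : T.IsTree) {p q z : ι} (h1 : anc p z) (h2 : anc q z) :
    anc p q ∨ anc q p := by
  obtain ⟨P, hP⟩ := exists_canon hT z
  have hq : q ∈ P.support := h2 P hP
  by_cases hpq : p ∈ (P.takeUntil q hq).support
  · exact Or.inl (anc_of_path hT _ (hP.takeUntil hq) hpq)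
  · right
    have hp : p ∈ P.support := h1 P hP
    have hp2 : p ∈ (P.dropUntil q hq).support := by
      have := P.take_spec hq
      rw [← this, SimpleGraph.Walk.mem_support_append_iff] at hp
      tauto
    -- canonical path root → p passes through q
    have hW : ((P.takeUntil q hq).append ((P.dropUntil q hq).takeUntil p hp2)).IsPath := by
      have hsplit : ((P.dropUntil q hq).takeUntil p hp2).append
          ((P.dropUntil q hq).dropUntil p hp2) = P.dropUntil q hq :=
        (P.dropUntil q hq).take_spec hp2
      have : ((P.takeUntil q hq).append ((P.dropUntil q hq).takeUntil p hp2)).append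
          ((P.dropUntil q hq).dropUntil p hp2) = P := by
        rw [← SimpleGraph.Walk.append_assoc, hsplit, P.take_spec hq]
      have hP' : (((P.takeUntil q hq).append ((P.dropUntil q hq).takeUntil p hp2)).append
          ((P.dropUntil q hq).dropUntil p hp2)).IsPath := by rw [this]; exact hP
      exact hP'.of_append_left
    refine anc_of_path hT _ hW ?_
    rw [SimpleGraph.Walk.mem_support_append_iff]
    exact Or.inl (SimpleGraph.Walk.end_mem_support _)

/-- if `anc u y` and `anc y m` then every path from `u` to `m` passes through `y`. -/
lemma anc_mem_path (hT : T.IsTree) {u y m : ι} (h1 : anc u y) (h2 : anc y m)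
    (p : T.Walk u m) (hp : p.IsPath) : y ∈ p.support := by
  obtain ⟨P, hP⟩ := exists_canon hT m
  have hu : u ∈ P.support := (anc_trans hT h1 h2) P hP
  have hy : y ∈ P.support := h2 P hP
  have hdrop : (P.dropUntil u hu).IsPath := hP.dropUntil hu
  -- p is the unique path u → m
  have hpe : p = P.dropUntil u hu := by
    obtain ⟨r, _, hh⟩ := hT.existsUnique_path u m
    rw [hh p hp, hh _ hdrop]
  rw [hpe]
  by_contra hcon
  have : y ∈ (P.takeUntil u hu).support := by
    have := P.take_spec hu
    rw [← this, SimpleGraph.Walk.mem_support_append_iff] at hy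
    tauto
  have : anc y u := anc_of_path hT _ (hP.takeUntil hu) this
  have : y = u := anc_antisymm hT this h1
  subst this
  exact hcon (SimpleGraph.Walk.start_mem_support _)

end TreeLemmas

section GraphLemmas

variable {ι : Type} [DecidableEq ι] {T : SimpleGraph ι} {root : ι}
variable {H : SimpleGraph ι} {B : ι → Set ι}

local notation "anc" => IsAncestor T root

/-- from a walk in an induced subgraph to a walk in the ambient graph -/
lemma walk_down {G : SimpleGraph ι} {S : Set ι} :
    ∀ {a b : S} (_ : (G.induce S).Walk a b),
      ∃ q : G.Walk a.1 b.1, ∀ z ∈ q.support, z ∈ S := by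
  intro a b w
  induction w with
  | nil => exact ⟨SimpleGraph.Walk.nil, by simp⟩
  | cons h w ih =>
    obtain ⟨q, hq⟩ := ih
    have h' : G.Adj _ _ := h
    refine ⟨SimpleGraph.Walk.cons h' q, ?_⟩
    intro z hz
    change z ∈ _ :: q.support at hz
    rcases List.mem_cons.mp hz with hz | hz
    · subst hz; exact Subtype.coe_prop _
    · exact hq z hz

/-- from a walk in the ambient graph with support in S to reachability in the induced graph -/
lemma walk_up {G : SimpleGraph ι} {S : Set ι} :
    ∀ {a b : ι} (q : G.Walk a b) (hS : ∀ z ∈ q.support, z ∈ S),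
      (G.induce S).Reachable ⟨a, hS a q.start_mem_support⟩ ⟨b, hS b q.end_mem_support⟩ := by
  intro a b q
  induction q with
  | nil => intro hS; rfl
  | @cons a c b h q ih =>
    intro hS
    have hc : c ∈ S := hS c (by simp)
    have ha : a ∈ S := hS a (by simp)
    have step : (G.induce S).Adj ⟨a, ha⟩ ⟨c, hc⟩ := h
    exact (step.reachable).trans (ih (fun z hz => hS z (by simp [hz])))

/-- every edge of `H` joins two comparable vertices -/
lemma edge_comparable (hT : T.IsTree) (hdec : IsTreeDecomp H T B)
    (hnormal : ∀ v w : ι, v ∈ B w → IsAncestor T root v w)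
    {p q : ι} (h : H.Adj p q) : anc p q ∨ anc q p := by
  obtain ⟨m, hp, hq⟩ := hdec.edges_covered h
  exact anc_comparable hT (hnormal p m hp) (hnormal q m hq)

/-- separator lemma: an edge entering the subtree below `y` from outside has its outer
endpoint in `B y` -/
lemma edge_sep (hT : T.IsTree) (hdec : IsTreeDecomp H T B)
    (hself : ∀ v, v ∈ B v)
    (hnormal : ∀ v w : ι, v ∈ B w → IsAncestor T root v w)
    {u q y : ι} (h : H.Adj u q) (hyq : anc y q) (hyu : ¬ anc y u) :
    u ∈ B y ∧ anc u y := by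
  have huq : anc u q := by
    rcases edge_comparable hT hdec hnormal h with h1 | h1
    · exact h1
    · exact absurd (anc_trans hT hyq h1) hyu
  have huy : anc u y := by
    rcases anc_comparable hT huq hyq with h1 | h1
    · exact h1
    · exact absurd h1 hyu
  refine ⟨?_, huy⟩
  obtain ⟨m, hum, hqm⟩ := hdec.edges_covered h
  have hym : anc y m := anc_trans hT hyq (hnormal q m hqm)
  have hcon := hdec.bags_connected u
  have hu' : u ∈ {i | u ∈ B i} := hself u
  have hm' : m ∈ {i | u ∈ B i} := hum
  obtain ⟨w⟩ := hcon.preconnected ⟨u, hu'⟩ ⟨m, hm'⟩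
  obtain ⟨qw, hqw⟩ := walk_down w
  have hy : y ∈ qw.toPath.1.support :=
    anc_mem_path hT huy hym qw.toPath.1 qw.toPath.2
  exact hqw y (qw.support_toPath_subset hy)

/-- entry lemma: a connected set through the boundary of the subtree below `y`
must contain a vertex of `B y` outside that subtree. -/
lemma entry (hT : T.IsTree) (hdec : IsTreeDecomp H T B)
    (hself : ∀ v, v ∈ B v)
    (hnormal : ∀ v w : ι, v ∈ B w → IsAncestor T root v w)
    {S : Set ι} {y : ι} :
    ∀ {p q : ι} (w : H.Walk p q) (_ : ∀ z ∈ w.support, z ∈ S) (_ : anc y q),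
      anc y p ∨ ∃ u, u ∈ S ∧ ¬ anc y u ∧ u ∈ B y := by
  intro p q w
  induction w with
  | nil => intro _ hq; exact Or.inl hq
  | @cons a c b h w ih =>
    intro hS hq
    rcases ih (fun z hz => hS z (by simp [hz])) hq with h1 | h1
    · by_cases hya : anc y a
      · exact Or.inl hya
      · exact Or.inr ⟨a, hS a (by simp), hya, (edge_sep hT hdec hself hnormal h h1 hya).1⟩
    · exact Or.inr h1

/-- crossing lemma: a walk inside `A ∪ C` ending in `C` starts in `C` or contains an
edge from `A` to `C`. -/
lemma cross {A C : Set ι} :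
    ∀ {p q : ι} (w : H.Walk p q) (_ : ∀ z ∈ w.support, z ∈ A ∪ C) (_ : q ∈ C),
      p ∈ C ∨ ∃ a c, a ∈ A ∧ c ∈ C ∧ H.Adj a c := by
  intro p q w
  induction w with
  | nil => intro _ hq; exact Or.inl hq
  | @cons a c b h w ih =>
    intro hS hq
    rcases ih (fun z hz => hS z (by simp [hz])) hq with h1 | h1
    · by_cases hac : a ∈ C
      · exact Or.inl hac
      · rcases hS a (by simp) with h2 | h2
        · exact Or.inr ⟨a, c, h2, h1, h⟩
        · exact absurd h2 hac
    · exact Or.inr h1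

end GraphLemmas

section Counting

variable {ι : Type} [DecidableEq ι]

/-- all "descending chains" of length `k` through the bags -/
def chainFinset (Bf : ι → Finset ι) (x : ι) : ℕ → Finset (List ι)
  | 0 => {[]}
  | (k+1) => (chainFinset Bf x k).biUnion (fun l => (Bf (l.headD x)).image (fun u => u :: l))

lemma card_chainFinset {Bf : ι → Finset ι} {x : ι} {q : ℕ} (hq : ∀ u, (Bf u).card ≤ q) :
    ∀ k, (chainFinset Bf x k).card ≤ q ^ k := by
  intro k
  induction k with
  | zero => simp [chainFinset]
  | succ k ih =>
    calc ((chainFinset Bf x k).biUnion (fun l => (Bf (l.headD x)).image (fun u => u :: l))).card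
        ≤ (chainFinset Bf x k).card * q := by
          apply Finset.card_biUnion_le_card_mul
          intro l _
          exact (Finset.card_image_le).trans (hq _)
      _ ≤ q ^ k * q := Nat.mul_le_mul_right _ ih
      _ = q ^ (k+1) := by ring

lemma geom_sum_le {q : ℕ} (hq : 2 ≤ q) : ∀ n, (∑ m ∈ Finset.range (n+1), q ^ m) ≤ 2 * q ^ n := by
  intro n
  induction n with
  | zero => simp
  | succ n ih =>
    rw [Finset.sum_range_succ]
    have : q ^ n * 2 ≤ q ^ n * q := Nat.mul_le_mul_left _ hq
    calc (∑ m ∈ Finset.range (n+1), q ^ m) + q ^ (n+1) ≤ 2 * q ^ n + q ^ (n+1) := by omega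
      _ ≤ 2 * q ^ (n+1) := by ring_nf; ring_nf at this; omega

end Counting

section DropAnc

variable {ι : Type} [DecidableEq ι] {T : SimpleGraph ι} {root : ι}

lemma drop_anc (hT : T.IsTree) {x a z : ι} {P : T.Walk root x} (hP : P.IsPath)
    (ha : a ∈ P.support) (hz : z ∈ (P.dropUntil a ha).support) :
    IsAncestor T root a z := by
  have hzx : IsAncestor T root z x :=
    anc_of_path hT P hP (P.support_dropUntil_subset ha hz)
  have hax : IsAncestor T root a x := anc_of_path hT P hP ha
  rcases anc_comparable hT hax hzx with h1 | h1
  · exact h1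
  · have hzt : z ∈ (P.takeUntil a ha).support := h1 _ (hP.takeUntil ha)
    have hnd := hP.support_nodup
    rw [← P.take_spec ha, SimpleGraph.Walk.support_append] at hnd
    have hdisj := List.disjoint_of_nodup_append hnd
    rcases List.mem_cons.mp (by rw [← SimpleGraph.Walk.support_eq_cons (P.dropUntil a ha)]; exact hz) with h2 | h2
    · rw [h2]; exact anc_refl a
    · exact absurd h2 (fun hh => hdisj hzt hh)

end DropAnc

theorem main_lemma {ι : Type} [DecidableEq ι] {t z : ℕ} (ht : 1 ≤ t)
    {H T : SimpleGraph ι} {root : ι} {B : ι → Set ι}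
    (hdec : IsTreeDecomp H T B)
    (hwidth : ∀ i, (B i).encard ≤ (t : ℕ∞) + 1)
    (hself : ∀ v, v ∈ B v)
    (hnormal : ∀ v w : ι, v ∈ B w → IsAncestor T root v w)
    {X : Fin z → Set ι}
    (hXconn : ∀ i, (H.induce (X i)).Connected)
    {s₁ s₂ : ℕ} (hs₁ : 1 ≤ s₁) (hs₂ : 2 ≤ s₂)
    (h2 : ¬ ∃ S₁ S₂ : Finset ι, s₁ ≤ S₁.card ∧ s₂ ≤ S₂.card ∧
      ∀ v ∈ S₁, ∃ i : Fin z, v ∈ X i ∧ X i ⊆ {x : ι | IsAncestor T root v x} ∧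
        (S₂ : Set ι) ⊆ X i) :
    TreewidthAtMost
      (SimpleGraph.fromRel fun v w : ι => ∃ i j : Fin z,
        (v ∈ X i ∧ X i ⊆ {x : ι | IsAncestor T root v x}) ∧
        (w ∈ X j ∧ X j ⊆ {x : ι | IsAncestor T root w x}) ∧
        (H.induce (X i ∪ X j)).Connected)
      ((s₁ + 2) * (t + 1) ^ s₂ - 2) := by
  have hT : T.IsTree := hdec.isTree
  set Hs : SimpleGraph ι := SimpleGraph.fromRel (fun v w : ι => ∃ i j : Fin z,
        (v ∈ X i ∧ X i ⊆ {x : ι | IsAncestor T root v x}) ∧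
        (w ∈ X j ∧ X j ⊆ {x : ι | IsAncestor T root w x}) ∧
        (H.induce (X i ∪ X j)).Connected) with hHs
  -- adjacency structure
  have hadj : ∀ {v w : ι}, Hs.Adj v w → v ≠ w ∧ ∃ i j : Fin z,
      (v ∈ X i ∧ ∀ y ∈ X i, IsAncestor T root v y) ∧
      (w ∈ X j ∧ ∀ y ∈ X j, IsAncestor T root w y) ∧
      (H.induce (X i ∪ X j)).Connected := by
    intro v w hvw
    rw [hHs, SimpleGraph.fromRel_adj] at hvw
    obtain ⟨hne, h | h⟩ := hvw
    · obtain ⟨i, j, ⟨h1, h1'⟩, ⟨h2', h2''⟩, h3⟩ := h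
      exact ⟨hne, i, j, ⟨h1, fun y hy => h1' hy⟩, ⟨h2', fun y hy => h2'' hy⟩, h3⟩
    · obtain ⟨i, j, ⟨h1, h1'⟩, ⟨h2', h2''⟩, h3⟩ := h
      exact ⟨hne, j, i, ⟨h2', fun y hy => h2'' hy⟩, ⟨h1, fun y hy => h1' hy⟩,
        by rwa [Set.union_comm]⟩
  -- comparability of Hs-adjacent vertices
  have hcomp : ∀ {v w : ι}, Hs.Adj v w →
      IsAncestor T root v w ∨ IsAncestor T root w v := by
    intro v w hvw
    obtain ⟨hne, i, j, ⟨hvi, hvanc⟩, ⟨hwj, hwanc⟩, hconn⟩ := hadj hvw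
    obtain ⟨wk⟩ := hconn.preconnected ⟨v, Or.inl hvi⟩ ⟨w, Or.inr hwj⟩
    obtain ⟨q, hq⟩ := walk_down wk
    rcases cross q hq hwj with h1 | ⟨p0, q0, hp0, hq0, hadj0⟩
    · exact Or.inr (hwanc v h1)
    · have hvp := hvanc p0 hp0
      have hwq := hwanc q0 hq0
      rcases edge_comparable hT hdec hnormal hadj0 with h1 | h1
      · exact anc_comparable hT (anc_trans hT hvp h1) hwq
      · exact anc_comparable hT hvp (anc_trans hT hwq h1)
  refine ⟨ι, T, fun x => {a | IsAncestor T root a x ∧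
      (a = x ∨ ∃ b, IsAncestor T root x b ∧ Hs.Adj a b)}, ⟨hT, ?_, ?_, ?_⟩, ?_⟩
  · -- edges covered
    intro v w hvw
    rcases hcomp hvw with h1 | h1
    · exact ⟨w, ⟨h1, Or.inr ⟨w, anc_refl w, hvw⟩⟩, ⟨anc_refl w, Or.inl rfl⟩⟩
    · exact ⟨v, ⟨anc_refl v, Or.inl rfl⟩, ⟨h1, Or.inr ⟨v, anc_refl v, hvw.symm⟩⟩⟩
  · -- verts covered
    intro v
    exact ⟨v, anc_refl v, Or.inl rfl⟩
  · -- bags connected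
    intro a
    have ha : a ∈ {n : ι | IsAncestor T root a n ∧
        (a = n ∨ ∃ b, IsAncestor T root n b ∧ Hs.Adj a b)} := ⟨anc_refl a, Or.inl rfl⟩
    have key : ∀ x (hx : x ∈ {n : ι | IsAncestor T root a n ∧
        (a = n ∨ ∃ b, IsAncestor T root n b ∧ Hs.Adj a b)}),
        (T.induce {n : ι | IsAncestor T root a n ∧
          (a = n ∨ ∃ b, IsAncestor T root n b ∧ Hs.Adj a b)}).Reachable ⟨x, hx⟩ ⟨a, ha⟩ := by
      intro x hx
      obtain ⟨P, hP⟩ := exists_canon hT x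
      have haP : a ∈ P.support := hx.1 P hP
      have hsup : ∀ u ∈ (P.dropUntil a haP).support, u ∈ {n : ι | IsAncestor T root a n ∧
          (a = n ∨ ∃ b, IsAncestor T root n b ∧ Hs.Adj a b)} := by
        intro u hu
        have hau : IsAncestor T root a u := drop_anc hT hP haP hu
        have hux : IsAncestor T root u x :=
          anc_of_path hT P hP (P.support_dropUntil_subset haP hu)
        refine ⟨hau, ?_⟩
        rcases hx.2 with h1 | ⟨b, hxb, hab⟩
        · left
          exact anc_antisymm hT hau (by rwa [← h1] at hux)
        · by_cases hua : a = u
          · exact Or.inl hua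
          · exact Or.inr ⟨b, anc_trans hT hux hxb, hab⟩
      have := walk_up (P.dropUntil a haP) hsup
      exact this.symm
    show (T.induce {n : ι | IsAncestor T root a n ∧
        (a = n ∨ ∃ b, IsAncestor T root n b ∧ Hs.Adj a b)}).Connected
    haveI : Nonempty ({n : ι | IsAncestor T root a n ∧
        (a = n ∨ ∃ b, IsAncestor T root n b ∧ Hs.Adj a b)}) := ⟨⟨a, ha⟩⟩
    exact ⟨fun u v => (key u.1 u.2).trans (key v.1 v.2).symm⟩
  · -- width bound
    intro x
    have hfinB : ∀ u : ι, (B u).Finite := by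
      intro u
      rw [← Set.encard_lt_top_iff]
      refine lt_of_le_of_lt (hwidth u) (Ne.lt_top ?_)
      rw [show ((t:ℕ∞)+1) = ((t+1 : ℕ) : ℕ∞) by push_cast; ring]
      exact ENat.coe_ne_top _
    have hBf : ∀ u : ι, ((hfinB u).toFinset).card ≤ t + 1 := by
      intro u
      have h2' := hwidth u
      rw [(hfinB u).encard_eq_coe_toFinset_card] at h2'
      exact_mod_cast h2'
    set Bf : ι → Finset ι := fun u => (hfinB u).toFinset with hBfdef
    have hmemBf : ∀ {u v : ι}, v ∈ B u → v ∈ Bf u := fun h => (hfinB _).mem_toFinset.mpr h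
    -- sets of candidate roots over a fixed vertex set are small
    have hAS : ∀ S : Finset ι, s₂ ≤ S.card →
        {v : ι | ∃ i : Fin z, v ∈ X i ∧ X i ⊆ {y : ι | IsAncestor T root v y} ∧
          (↑S : Set ι) ⊆ X i}.encard ≤ ((s₁ - 1 : ℕ) : ℕ∞) := by
      intro S hS
      by_contra hcon
      push_neg at hcon
      have hs1le : ((s₁ : ℕ) : ℕ∞) ≤ {v : ι | ∃ i : Fin z, v ∈ X i ∧
          X i ⊆ {y : ι | IsAncestor T root v y} ∧ (↑S : Set ι) ⊆ X i}.encard := by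
        have h3 := Order.add_one_le_of_lt hcon
        have h4 : ((s₁ - 1 : ℕ) : ℕ∞) + 1 = ((s₁ : ℕ) : ℕ∞) := by
          have h5 : s₁ - 1 + 1 = s₁ := by omega
          rw [← h5]
          push_cast
          ring
        rwa [h4] at h3
      obtain ⟨t0, ht0sub, ht0card⟩ := Set.exists_subset_encard_eq hs1le
      have ht0fin : t0.Finite := by
        rw [← Set.encard_ne_top_iff, ht0card]
        simp
      refine h2 ⟨ht0fin.toFinset, S, ?_, hS, ?_⟩
      · have := ht0fin.encard_eq_coe_toFinset_card
        rw [this] at ht0card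
        exact le_of_eq (by exact_mod_cast ht0card.symm)
      · intro v hv
        exact ht0sub (ht0fin.mem_toFinset.mp hv)
    -- finite versions
    have hASfin : ∀ l : List ι, ∃ F : Finset ι, F.card ≤ s₁ - 1 ∧
        (s₂ ≤ l.toFinset.card → ∀ v : ι, (∃ i : Fin z, v ∈ X i ∧
          X i ⊆ {y : ι | IsAncestor T root v y} ∧ (↑l.toFinset : Set ι) ⊆ X i) → v ∈ F) := by
      intro l
      by_cases hl : s₂ ≤ l.toFinset.card
      · have hb := hAS l.toFinset hl
        have hfin : {v : ι | ∃ i : Fin z, v ∈ X i ∧ X i ⊆ {y : ι | IsAncestor T root v y} ∧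
            (↑l.toFinset : Set ι) ⊆ X i}.Finite := by
          rw [← Set.encard_ne_top_iff]
          exact ne_top_of_le_ne_top (by simp) hb
        refine ⟨hfin.toFinset, ?_, fun _ v hv => hfin.mem_toFinset.mpr hv⟩
        have := hfin.encard_eq_coe_toFinset_card
        rw [this] at hb
        exact_mod_cast hb
      · exact ⟨∅, by simp, fun h => absurd h hl⟩
    choose ASfin hAScard hASmem using hASfin
    set BigF : Finset ι := (({x} : Finset ι) ∪ (Finset.range (s₂+1)).biUnion
        (fun m => (chainFinset Bf x m).image (fun l => l.headD x))) ∪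
        (chainFinset Bf x s₂).biUnion ASfin with hBigF
    -- main inclusion
    have hsub : {a : ι | IsAncestor T root a x ∧
        (a = x ∨ ∃ b, IsAncestor T root x b ∧ Hs.Adj a b)} ⊆ ↑BigF := by
      intro a ha
      obtain ⟨hax, hcase⟩ := ha
      apply Finset.mem_coe.mpr
      by_cases hax' : a = x
      · subst hax'
        rw [hBigF]
        exact Finset.mem_union_left _ (Finset.mem_union_left _ (Finset.mem_singleton_self a))
      rcases hcase with h | ⟨b, hxb, hab⟩
      · exact absurd h hax'
      have hnxa : ¬ IsAncestor T root x a := fun h => hax' (anc_antisymm hT hax h)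
      obtain ⟨hne_ab, i, j, ⟨hai, hXia⟩, ⟨hbj, hXjb⟩, hconn⟩ := hadj hab
      have hXjx : ∀ y ∈ X j, IsAncestor T root x y := fun y hy => anc_trans hT hxb (hXjb y hy)
      -- step 0 : find u1 ∈ X i ∩ (B x) outside the subtree below x
      obtain ⟨wk0⟩ := hconn.preconnected ⟨a, Or.inl hai⟩ ⟨b, Or.inr hbj⟩
      obtain ⟨q0, hq0⟩ := walk_down wk0
      rcases entry hT hdec hself hnormal q0 hq0 hxb with hbad | ⟨u1, hu1S, hu1nx, hu1B⟩
      · exact absurd hbad hnxa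
      have hu1Xi : u1 ∈ X i := by
        rcases hu1S with h | h
        · exact h
        · exact absurd (hXjx u1 h) hu1nx
      have ITER : ∀ k : ℕ, 1 ≤ k →
          (∃ m, 1 ≤ m ∧ m ≤ k ∧ ∃ l ∈ chainFinset Bf x m, l.headD x = a) ∨
          (∃ l : List ι, l ∈ chainFinset Bf x k ∧ l ≠ [] ∧ l.length = k ∧ l.Nodup ∧
            (∀ u ∈ l, u ∈ X i ∧ IsAncestor T root u x ∧ u ≠ x) ∧
            (∀ u ∈ l, IsAncestor T root (l.headD x) u)) := by
        intro k
        induction k with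
        | zero => omega
        | succ k ih =>
          intro _
          by_cases hk1 : 1 ≤ k
          case neg =>
            have hk0 : k = 0 := by omega
            subst hk0
            right
            refine ⟨[u1], ?_, by simp, rfl, by simp, ?_, ?_⟩
            · show [u1] ∈ (chainFinset Bf x 0).biUnion
                (fun l => (Bf (l.headD x)).image (fun u => u :: l))
              refine Finset.mem_biUnion.mpr ⟨[], by simp [chainFinset], ?_⟩
              exact Finset.mem_image.mpr ⟨u1, hmemBf hu1B, rfl⟩
            · intro u hu
              have hu' : u = u1 := by simpa using hu
              subst hu'
              refine ⟨hu1Xi, hnormal u x hu1B, fun h => ?_⟩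
              rw [h] at hu1nx
              exact hu1nx (anc_refl x)
            · intro u hu
              have hu' : u = u1 := by simpa using hu
              subst hu'
              exact anc_refl u
          case pos =>
            rcases ih hk1 with ⟨m, hm1, hm2, rest⟩ | ⟨l, hlC, hlne, hllen, hlnd, hmem, hhead⟩
            · exact Or.inl ⟨m, hm1, by omega, rest⟩
            obtain ⟨u, l', rfl⟩ := List.exists_cons_of_ne_nil hlne
            have hhd : (u :: l').headD x = u := rfl
            obtain ⟨huXi, hux, hunex⟩ := hmem u (by simp)
            by_cases hau : a = u
            · exact Or.inl ⟨k, hk1, by omega, u :: l', hlC, by rw [hhd, ← hau]⟩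
            · have hanc_au : IsAncestor T root a u := hXia u huXi
              have hnua : ¬ IsAncestor T root u a :=
                fun h => hau (anc_antisymm hT hanc_au h)
              obtain ⟨wk1⟩ := (hXconn i).preconnected ⟨a, hai⟩ ⟨u, huXi⟩
              obtain ⟨q1, hq1⟩ := walk_down wk1
              rcases entry hT hdec hself hnormal q1 hq1 (anc_refl u) with
                hbad | ⟨u', hu'Xi, hu'nu, hu'B⟩
              · exact absurd hbad hnua
              right
              have hanc_u'u : IsAncestor T root u' u := hnormal u' u hu'B
              have hu'nequ : u' ≠ u := by
                intro h
                rw [h] at hu'nu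
                exact hu'nu (anc_refl u)
              refine ⟨u' :: u :: l', ?_, by simp, by simp [hllen], ?_, ?_, ?_⟩
              · show _ ∈ (chainFinset Bf x k).biUnion
                  (fun l => (Bf (l.headD x)).image (fun v => v :: l))
                refine Finset.mem_biUnion.mpr ⟨u :: l', hlC, ?_⟩
                refine Finset.mem_image.mpr ⟨u', ?_, rfl⟩
                rw [hhd]
                exact hmemBf hu'B
              · refine List.nodup_cons.mpr ⟨?_, hlnd⟩
                intro hmem'
                have := hhead u' hmem'
                rw [hhd] at this
                exact hu'nu this
              · intro v hv
                rcases List.mem_cons.mp hv with rfl | hv'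
                · refine ⟨hu'Xi, anc_trans hT hanc_u'u hux, fun h => ?_⟩
                  rw [h] at hanc_u'u
                  exact hunex (anc_antisymm hT hux hanc_u'u)
                · exact hmem v hv'
              · intro v hv
                rcases List.mem_cons.mp hv with rfl | hv'
                · exact anc_refl v
                · have := hhead v hv'
                  rw [hhd] at this
                  exact anc_trans hT hanc_u'u this
      rcases ITER s₂ (by omega) with ⟨m, hm1, hm2, l, hlC, hlhead⟩ |
        ⟨l, hlC, hlne, hllen, hlnd, hmem, _⟩
      · rw [hBigF]
        apply Finset.mem_union_left
        apply Finset.mem_union_right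
        refine Finset.mem_biUnion.mpr ⟨m, Finset.mem_range.mpr (by omega), ?_⟩
        exact Finset.mem_image.mpr ⟨l, hlC, hlhead⟩
      · rw [hBigF]
        apply Finset.mem_union_right
        refine Finset.mem_biUnion.mpr ⟨l, hlC, ?_⟩
        refine hASmem l ?_ a ⟨i, hai, fun y hy => hXia y hy, ?_⟩
        · rw [List.toFinset_card_of_nodup hlnd, hllen]
        · intro v hv
          exact (hmem v (List.mem_toFinset.mp hv)).1
    -- cardinality computation
    have hQ4 : 4 ≤ (t+1)^s₂ := by
      calc (4 : ℕ) = 2^2 := rfl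
        _ ≤ (t+1)^2 := Nat.pow_le_pow_left (by omega) 2
        _ ≤ (t+1)^s₂ := Nat.pow_le_pow_right (by omega) hs₂
    have hcardC := card_chainFinset (Bf := Bf) (x := x) (q := t+1) hBf
    have hheads : ((Finset.range (s₂+1)).biUnion
        (fun m => (chainFinset Bf x m).image (fun l => l.headD x))).card ≤ 2 * (t+1)^s₂ := by
      refine le_trans Finset.card_biUnion_le ?_
      refine le_trans (Finset.sum_le_sum (fun m _ => ?_)) (geom_sum_le (by omega) s₂)
      exact le_trans Finset.card_image_le (hcardC m)
    have htails : ((chainFinset Bf x s₂).biUnion ASfin).card ≤ (t+1)^s₂ * (s₁ - 1) := by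
      refine le_trans (Finset.card_biUnion_le_card_mul _ _ _ (fun l _ => hAScard l)) ?_
      exact Nat.mul_le_mul_right _ (hcardC s₂)
    have hfincard : BigF.card ≤ (s₁ + 2) * (t+1)^s₂ - 2 + 1 := by
      have h1 : BigF.card ≤ 1 + 2 * (t+1)^s₂ + (t+1)^s₂ * (s₁ - 1) := by
        rw [hBigF]
        refine le_trans (Finset.card_union_le _ _) ?_
        have h2' := Finset.card_union_le ({x} : Finset ι)
          ((Finset.range (s₂+1)).biUnion
            (fun m => (chainFinset Bf x m).image (fun l => l.headD x)))
        simp only [Finset.card_singleton] at h2'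
        omega
      have hsc : (s₁ + 2) * ((t+1)^s₂) = (t+1)^s₂ * (s₁ - 1) + 3 * (t+1)^s₂ := by
        have h5 : s₁ - 1 + 3 = s₁ + 2 := by omega
        calc (s₁+2) * ((t+1)^s₂) = ((s₁-1)+3) * ((t+1)^s₂) := by rw [h5]
          _ = (t+1)^s₂ * (s₁ - 1) + 3 * (t+1)^s₂ := by ring
      rw [hsc]
      generalize hA : (t+1)^s₂ * (s₁ - 1) = A at h1 ⊢
      generalize hB : (t+1)^s₂ = Q at h1 hQ4 ⊢
      omega
    calc {a : ι | IsAncestor T root a x ∧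
        (a = x ∨ ∃ b, IsAncestor T root x b ∧ Hs.Adj a b)}.encard
        ≤ (↑BigF : Set ι).encard := Set.encard_mono hsub
      _ = (BigF.card : ℕ∞) := Set.encard_coe_eq_coe_finsetCard _
      _ ≤ (((s₁ + 2) * (t+1)^s₂ - 2 + 1 : ℕ) : ℕ∞) := by exact_mod_cast hfincard
      _ = ((((s₁ + 2) * (t+1)^s₂ - 2 : ℕ)) : ℕ∞) + 1 := by push_cast; ring


end AuxForStatement19

/-- Let `t` and `z` be positive integers, `(T,B)` a normal tree
decomposition of a `t`-tree `H`, and for each `i ∈ {1,…,z}` let `X_i ⊆ V(H)` be a set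
inducing a connected subgraph of `H`. Let `H*` be the graph with vertex set `V(H)` in which
distinct vertices `v` and `w` are adjacent iff there exist `i, j` with
`{v} ⊆ X_i ⊆ V(T_v)`, `{w} ⊆ X_j ⊆ V(T_w)`, and `H[X_i ∪ X_j]` connected. Then for all
integers `s₁ ≥ 1` and `s₂ ≥ 2`, either `H*` has treewidth at most
`(s₁ + 2)(t + 1)^{s₂} − 2`, or there are subsets `S₁, S₂` of `V(H)` with `|S₁| ≥ s₁`,
`|S₂| ≥ s₂` such that for each `v ∈ S₁` there is `i` with `{v} ⊆ X_i ⊆ V(T_v)` and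
`S₂ ⊆ X_i`. -/
theorem normal_treeDecomp_dichotomy (ι : Type) (t z : ℕ) (ht : 1 ≤ t) (hz : 1 ≤ z)
    (H : SimpleGraph ι)
    (hHtw : TreewidthAtMost H t)
    (hHnot : ¬TreewidthAtMost H (t - 1))
    (hHmax : ∀ v w : ι, v ≠ w → ¬H.Adj v w →
      ¬TreewidthAtMost (H ⊔ SimpleGraph.fromEdgeSet {s(v, w)}) t)
    (T : SimpleGraph ι) (root : ι) (B : ι → Set ι)
    (hdec : IsTreeDecomp H T B)
    (hwidth : ∀ i, (B i).encard ≤ (t : ℕ∞) + 1)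
    (hself : ∀ v, v ∈ B v)
    (hnormal : ∀ v w : ι, v ∈ B w → IsAncestor T root v w)
    (X : Fin z → Set ι)
    (hXconn : ∀ i, (H.induce (X i)).Connected)
    (s₁ s₂ : ℕ) (hs₁ : 1 ≤ s₁) (hs₂ : 2 ≤ s₂) :
    TreewidthAtMost
      (SimpleGraph.fromRel fun v w : ι => ∃ i j : Fin z,
        (v ∈ X i ∧ X i ⊆ {x : ι | IsAncestor T root v x}) ∧
        (w ∈ X j ∧ X j ⊆ {x : ι | IsAncestor T root w x}) ∧
        (H.induce (X i ∪ X j)).Connected)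
      ((s₁ + 2) * (t + 1) ^ s₂ - 2) ∨
    ∃ S₁ S₂ : Finset ι, s₁ ≤ S₁.card ∧ s₂ ≤ S₂.card ∧
      ∀ v ∈ S₁, ∃ i : Fin z, v ∈ X i ∧ X i ⊆ {x : ι | IsAncestor T root v x} ∧
        (S₂ : Set ι) ⊆ X i := by
  classical
  by_cases hout : ∃ S₁ S₂ : Finset ι, s₁ ≤ S₁.card ∧ s₂ ≤ S₂.card ∧
      ∀ v ∈ S₁, ∃ i : Fin z, v ∈ X i ∧ X i ⊆ {x : ι | IsAncestor T root v x} ∧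
        (S₂ : Set ι) ⊆ X i
  · exact Or.inr hout
  · exact Or.inl (main_lemma ht hdec hwidth hself hnormal hXconn hs₁ hs₂ hout)
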